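/- Let H be an r-uniform hypergraph, let C = v_1, e_1, v_2, …, v_c, e_c, v_1 be a Berge cycle of maximum length in H, let u ∈ V(H) − V(C), let B = {e_j ∈ E(C) : u ∈ e_j} with b = |B|, and let W be a (u,C)-expanding set. Then: (i) if the edges of B form exactly q maximal runs of consecutive edges along the cyclic order of C, then |W| ≤ c − (b + q) + 2; (ii) if the vertices of W form exactly q' maximal runs of consecutive vertices along the cyclic order of C, then b ≤ c − (|W| + q') + 2. -/

import Mathlib

/-- A hypergraph on vertex type `α`: a finite vertex set together with a family of
distinct subsets of it, called edges. -/
structure BHypergraph (α : Type*) [DecidableEq α] where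
  verts : Finset α
  edges : Finset (Finset α)
  edge_sub : ∀ e ∈ edges, e ⊆ verts

/-- A simple graph is 2-connected if it has at least 3 vertices, is connected, and
remains connected after deleting any single vertex. -/
def IsTwoConnectedGraph {V : Type*} (G : SimpleGraph V) : Prop :=
  3 ≤ Nat.card V ∧ G.Connected ∧
    ∀ x : V, ((⊤ : G.Subgraph).deleteVerts {x}).coe.Connected

namespace BHypergraph

variable {α : Type*} [DecidableEq α]

/-- `H` is `r`-uniform: each edge has exactly `r` vertices. -/
def Uniform (H : BHypergraph α) (r : ℕ) : Prop := ∀ e ∈ H.edges, e.card = r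

/-- The degree of a vertex: the number of edges containing it. -/
def degree (H : BHypergraph α) (v : α) : ℕ := (H.edges.filter (fun e => v ∈ e)).card

/-- The minimum degree of `H` is at least `k`. -/
def MinDegreeGE (H : BHypergraph α) (k : ℕ) : Prop := ∀ v ∈ H.verts, k ≤ H.degree v

/-- The vertex type of the incidence graph of `H`: vertices of `H` together with
edges of `H`. -/
def IncVert (H : BHypergraph α) : Type _ :=
  {x : α ⊕ Finset α // Sum.elim (fun v => v ∈ H.verts) (fun e => e ∈ H.edges) x}

/-- The incidence (bipartite) graph of `H`: `v ∈ V(H)` is adjacent to `e ∈ E(H)`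
iff `v ∈ e`. -/
def incidenceGraph (H : BHypergraph α) : SimpleGraph (IncVert H) where
  Adj x y := (∃ v e, x.1 = Sum.inl v ∧ y.1 = Sum.inr e ∧ v ∈ e) ∨
             (∃ v e, y.1 = Sum.inl v ∧ x.1 = Sum.inr e ∧ v ∈ e)
  symm := ⟨fun _ _ h => h.elim Or.inr Or.inl⟩
  loopless := ⟨by
    rintro x (⟨v, e, h1, h2, _⟩ | ⟨v, e, h1, h2, _⟩) <;> rw [h1] at h2 <;> simp at h2⟩

/-- `H` is 2-connected iff its incidence graph is a 2-connected graph. -/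
def TwoConnected (H : BHypergraph α) : Prop := IsTwoConnectedGraph H.incidenceGraph

/-- `H` contains a Berge cycle of length `c`: `c` distinct vertices `v_1, …, v_c` and
`c` distinct edges `e_1, …, e_c` with `{v_i, v_{i+1}} ⊆ e_i` (indices mod `c`). -/
def HasBergeCycle (H : BHypergraph α) (c : ℕ) : Prop :=
  2 ≤ c ∧ ∃ (v : ZMod c → α) (e : ZMod c → Finset α),
    Function.Injective v ∧ Function.Injective e ∧
    (∀ i, e i ∈ H.edges) ∧ (∀ i, v i ∈ e i) ∧ (∀ i, v (i + 1) ∈ e i)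

end BHypergraph

open BHypergraph

variable {α : Type*} [DecidableEq α]

/-- A Berge cycle of length `c` in `H`, with defining vertices `v i` and edges `e i`
indexed cyclically by `ZMod c`; edge `e i` contains `v i` and `v (i+1)`. -/
structure BergeCycle (H : BHypergraph α) (c : ℕ) where
  hc : 2 ≤ c
  v : ZMod c → α
  e : ZMod c → Finset α
  v_inj : Function.Injective v
  e_inj : Function.Injective e
  e_mem : ∀ i, e i ∈ H.edges
  mem_self : ∀ i, v i ∈ e i
  mem_succ : ∀ i, v (i + 1) ∈ e i

/-- The set of defining vertices of a Berge cycle. -/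
def BergeCycle.vset {H : BHypergraph α} {c : ℕ} (C : BergeCycle H c) : Finset α :=
  letI : NeZero c := ⟨by have h := C.hc; omega⟩
  Finset.image C.v Finset.univ

/-- The set of edges of a Berge cycle. -/
def BergeCycle.eset {H : BHypergraph α} {c : ℕ} (C : BergeCycle H c) : Finset (Finset α) :=
  letI : NeZero c := ⟨by have h := C.hc; omega⟩
  Finset.image C.e Finset.univ

/-- A Berge path `u 0, f 0, u 1, …, f (ℓ-1), u ℓ` in `H` with `ℓ` edges:
distinct vertices, distinct edges, and `{u i, u (i+1)} ⊆ f i`. -/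
structure BergePath (H : BHypergraph α) (ℓ : ℕ) where
  u : Fin (ℓ + 1) → α
  f : Fin ℓ → Finset α
  u_inj : Function.Injective u
  f_inj : Function.Injective f
  u_mem : ∀ i, u i ∈ H.verts
  f_mem : ∀ i, f i ∈ H.edges
  mem_cast : ∀ i : Fin ℓ, u i.castSucc ∈ f i
  mem_succ : ∀ i : Fin ℓ, u i.succ ∈ f i

def BergePath.vset {H : BHypergraph α} {ℓ : ℕ} (P : BergePath H ℓ) : Finset α :=
  Finset.image P.u Finset.univ

def BergePath.eset {H : BHypergraph α} {ℓ : ℕ} (P : BergePath H ℓ) : Finset (Finset α) :=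
  Finset.image P.f Finset.univ

/-- A partial Berge path `f_0, u_1, f_1, …, f_(ℓ-1), u_ℓ`, beginning with an edge:
here `u i` denotes the vertex `u_(i+1)` and `f i` denotes the edge `f_i`, so that
`u_1 ∈ f_0` and `{u_i, u_(i+1)} ⊆ f_i` for `1 ≤ i ≤ ℓ-1`. -/
structure PartialBergePath (H : BHypergraph α) (ℓ : ℕ) where
  u : Fin ℓ → α
  f : Fin ℓ → Finset α
  u_inj : Function.Injective u
  f_inj : Function.Injective f
  u_mem : ∀ i, u i ∈ H.verts
  f_mem : ∀ i, f i ∈ H.edges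
  mem_self : ∀ i : Fin ℓ, u i ∈ f i
  mem_next : ∀ (i : ℕ) (h : i + 1 < ℓ), u ⟨i, by omega⟩ ∈ f ⟨i + 1, h⟩

def PartialBergePath.vset {H : BHypergraph α} {ℓ : ℕ} (P : PartialBergePath H ℓ) : Finset α :=
  Finset.image P.u Finset.univ

def PartialBergePath.eset {H : BHypergraph α} {ℓ : ℕ} (P : PartialBergePath H ℓ) :
    Finset (Finset α) :=
  Finset.image P.f Finset.univ

/-- An ordinary lollipop (o-lollipop): a Berge cycle `C` together with a Berge path `P`
starting at a vertex of `C`, with `|V(C) ∩ V(P)| = 1` and `E(C) ∩ E(P) = ∅`. -/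
structure OLollipop (H : BHypergraph α) (c ℓ : ℕ) where
  C : BergeCycle H c
  P : BergePath H ℓ
  start_mem : P.u 0 ∈ C.vset
  inter_v : C.vset ∩ P.vset = {P.u 0}
  inter_e : C.eset ∩ P.eset = ∅

/-- A partial lollipop (p-lollipop): a Berge cycle `C` together with a partial Berge
path `P` whose first edge is an edge of `C`, with `V(C) ∩ V(P) = ∅` and
`E(C) ∩ E(P) = {f_0}`. -/
structure PLollipop (H : BHypergraph α) (c ℓ : ℕ) where
  hl : 1 ≤ ℓ
  C : BergeCycle H c
  P : PartialBergePath H ℓ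
  first_edge : P.f ⟨0, hl⟩ ∈ C.eset
  inter_v : C.vset ∩ P.vset = ∅
  inter_e : C.eset ∩ P.eset = {P.f ⟨0, hl⟩}

/-- A lollipop of `H` is either an o-lollipop or a p-lollipop. -/
inductive Lollipop (H : BHypergraph α) : Type _ where
  | o : (c ℓ : ℕ) → OLollipop H c ℓ → Lollipop H
  | p : (c ℓ : ℕ) → PLollipop H c ℓ → Lollipop H

namespace Lollipop

variable {H : BHypergraph α}

/-- The set of defining vertices of the cycle of a lollipop. -/
def cycVset : Lollipop H → Finset α
  | .o _ _ L => L.C.vset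
  | .p _ _ L => L.C.vset

/-- The set of edges of the cycle of a lollipop. -/
def cycEset : Lollipop H → Finset (Finset α)
  | .o _ _ L => L.C.eset
  | .p _ _ L => L.C.eset

/-- The set of vertices of the path of a lollipop. -/
def pathVset : Lollipop H → Finset α
  | .o _ _ L => L.P.vset
  | .p _ _ L => L.P.vset

/-- The set of edges of the path of a lollipop. -/
def pathEset : Lollipop H → Finset (Finset α)
  | .o _ _ L => L.P.eset
  | .p _ _ L => L.P.eset

/-- `|V(P) − V(C)|`. -/
def pGain (L : Lollipop H) : ℕ := (L.pathVset \ L.cycVset).card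

/-- The number of incidences between vertices of `V(P) − V(C)` and edges of
`E(C) − E(P)`, counted with multiplicity. -/
def incCount (L : Lollipop H) : ℕ :=
  ∑ e ∈ (L.cycEset \ L.pathEset), (e ∩ (L.pathVset \ L.cycVset)).card

/-- The number of edges of `E(P) − E(C)` entirely contained in `V(P) − V(C)`. -/
def contCount (L : Lollipop H) : ℕ :=
  ((L.pathEset \ L.cycEset).filter (fun e => e ⊆ L.pathVset \ L.cycVset)).card

/-- 1-good: the cycle is as long as possible among all lollipops. -/
def Good1 (L : Lollipop H) : Prop := ∀ L' : Lollipop H, L'.cycVset.card ≤ L.cycVset.card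

/-- 2-good: lexicographically maximizes `(|V(C)|, |V(P)−V(C)|)`. -/
def Good2 (L : Lollipop H) : Prop :=
  L.Good1 ∧ ∀ L' : Lollipop H, L'.cycVset.card = L.cycVset.card → L'.pGain ≤ L.pGain

/-- 3-good. -/
def Good3 (L : Lollipop H) : Prop :=
  L.Good2 ∧ ∀ L' : Lollipop H, L'.cycVset.card = L.cycVset.card → L'.pGain = L.pGain →
    L'.incCount ≤ L.incCount

/-- 4-good (best). -/
def Good4 (L : Lollipop H) : Prop :=
  L.Good3 ∧ ∀ L' : Lollipop H, L'.cycVset.card = L.cycVset.card → L'.pGain = L.pGain →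
    L'.incCount = L.incCount → L'.contCount ≤ L.contCount

end Lollipop

/-- A disjoint cycle-path pair (dcp-pair): a Berge cycle and a Berge path having no
common edges and such that no defining vertex of the cycle is a vertex of the path. -/
structure DcpPair (H : BHypergraph α) where
  c : ℕ
  l : ℕ
  C : BergeCycle H c
  P : BergePath H l
  disj_v : Disjoint C.vset P.vset
  disj_e : Disjoint C.eset P.eset

namespace DcpPair

variable {H : BHypergraph α}

/-- The number of incidences between vertices of `V(P)` and edges of `E(C)`,
counted with multiplicity. -/
def incCount (D : DcpPair H) : ℕ := ∑ e ∈ D.C.eset, (e ∩ D.P.vset).card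

/-- The number of edges of `E(P)` entirely contained in `V(P)`. -/
def contCount (D : DcpPair H) : ℕ := (D.P.eset.filter (fun e => e ⊆ D.P.vset)).card

/-- 1-good dcp-pair. -/
def Good1 (D : DcpPair H) : Prop := ∀ D' : DcpPair H, D'.C.vset.card ≤ D.C.vset.card

/-- 2-good dcp-pair: lexicographically maximizes `(|V(C)|, |V(P)|)`. -/
def Good2 (D : DcpPair H) : Prop :=
  D.Good1 ∧ ∀ D' : DcpPair H, D'.C.vset.card = D.C.vset.card →
    D'.P.vset.card ≤ D.P.vset.card

/-- 3-good dcp-pair. -/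
def Good3 (D : DcpPair H) : Prop :=
  D.Good2 ∧ ∀ D' : DcpPair H, D'.C.vset.card = D.C.vset.card →
    D'.P.vset.card = D.P.vset.card → D'.incCount ≤ D.incCount

/-- 4-good dcp-pair. -/
def Good4 (D : DcpPair H) : Prop :=
  D.Good3 ∧ ∀ D' : DcpPair H, D'.C.vset.card = D.C.vset.card →
    D'.P.vset.card = D.P.vset.card → D'.incCount = D.incCount →
    D'.contCount ≤ D.contCount

end DcpPair

/-- The `E'`-neighborhood of a vertex `x`: all vertices `w` such that some edge of `E'`
contains both `x` and `w`. -/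
def nbhd (E' : Finset (Finset α)) (x : α) : Finset α :=
  (E'.filter (fun e => x ∈ e)).biUnion id

/-- `W ⊆ V(C)` is `(u,C)`-expanding: for every two distinct vertices `x, y ∈ W` there is
a Berge path `R` from `x` to `y` whose internal vertices avoid `V(C) ∪ {u}` and all of
whose edges lie in `E(H) − E(C)`. -/
def IsExpanding {α : Type*} [DecidableEq α] {H : BHypergraph α} {c : ℕ}
    (C : BergeCycle H c) (u : α) (W : Finset α) : Prop :=
  W ⊆ C.vset ∧ ∀ x ∈ W, ∀ y ∈ W, x ≠ y →
    ∃ (ℓ : ℕ) (R : BergePath H ℓ),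
      R.u 0 = x ∧ R.u (Fin.last ℓ) = y ∧
      (∀ t : Fin (ℓ + 1), t ≠ 0 → t ≠ Fin.last ℓ → R.u t ∉ C.vset ∧ R.u t ≠ u) ∧
      (∀ t : Fin ℓ, R.f t ∉ C.eset)


/-! If two distinct edges `e x`, `e y` of `C` contain `u` and `v x, v y ∈ W`, then the path `R`
joining `v x` and `v y` outside `C` splices into `C`: walking `u, e y, v (y+1), …, v x`, then `R`
back to `v y`, then `v y, e (y-1), …, v (x+1), e x, u` gives a Berge cycle of length `c + |R|`,
longer than `C`. Applied also to the reversed cycle, this shows that at most one index `j` has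
`u ∈ e j` and `v j ∈ W`, and at most one has `u ∈ e j` and `v (j+1) ∈ W`. Both inequalities then
follow by counting the gaps between the runs of `W` (for (ii)) or of `B` (for (i)). -/

open Finset

theorem List.nodup_append_append_reverse {β : Type*} {l₁ l₂ l₃ : List β}
    (h₁₃ : (l₁ ++ l₃).Nodup) (h₂ : l₂.Nodup) (hdisj : ∀ a ∈ l₂, a ∉ l₁ ++ l₃) :
    (l₁ ++ l₂ ++ l₃.reverse).Nodup := by
  have hperm : (l₁ ++ l₂ ++ l₃.reverse).Perm (l₂ ++ (l₁ ++ l₃)) := by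
    rw [← List.append_assoc]
    exact List.perm_append_comm.append (List.reverse_perm _)
  exact hperm.nodup_iff.2
    (List.nodup_append.2 ⟨h₂, h₁₃, fun a ha b hb hab => hdisj a ha (hab ▸ hb)⟩)

theorem ZMod.nodup_map_range_add {c n : ℕ} {β : Type*} {g : ZMod c → β}
    (hg : Function.Injective g) (b : ZMod c) (hn : n ≤ c) :
    ((List.range n).map fun j : ℕ => g (b + j)).Nodup :=
  List.nodup_range.map_on fun i hi j hj hij => by
    simp only [List.mem_range] at hi hj
    simpa [Nat.mod_eq_of_lt (hi.trans_le hn), Nat.mod_eq_of_lt (hj.trans_le hn)] using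
      (ZMod.natCast_eq_natCast_iff' i j c).1 (add_left_cancel (hg hij))

theorem ZMod.exists_arc_lengths_of_ne {c : ℕ} [NeZero c] {x y : ZMod c} (hxy : x ≠ y) :
    ∃ d k : ℕ, y + 1 + d = x ∧ x + 1 + k = y ∧ d + 1 + (k + 1) = c := by
  have h0 : (x - y).val ≠ 0 := by rw [Ne, ZMod.val_eq_zero, sub_eq_zero]; exact hxy
  have hlt := ZMod.val_lt (x - y)
  refine ⟨(x - y).val - 1, c - (x - y).val - 1, ?_, ?_, by omega⟩
  · rw [Nat.cast_sub (by omega), ZMod.natCast_zmod_val]; ring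
  · rw [Nat.cast_sub (by omega), Nat.cast_sub hlt.le, ZMod.natCast_self, ZMod.natCast_zmod_val]
    ring

/-- `vs = [w₀, …, wₙ]` and `es = [f₀, …, fₙ₋₁]` with `wᵢ, wᵢ₊₁ ∈ fᵢ`; nothing needs to be
distinct. -/
def IsBergeWalk {V : Type*} (vs : List V) (es : List (Finset V)) : Prop :=
  List.Forall₂ (· ∈ ·) vs.dropLast es ∧ List.Forall₂ (· ∈ ·) vs.tail es

section IsBergeWalk

variable {V : Type*} {vs ws : List V} {es fs : List (Finset V)} {w : V}

theorem isBergeWalk_iff (hlen : vs.length = es.length + 1) :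
    IsBergeWalk vs es ↔ ∀ i (hi : i < es.length), vs[i] ∈ es[i] ∧ vs[i + 1] ∈ es[i] := by
  simp only [IsBergeWalk, List.forall₂_iff_get, List.length_dropLast, List.length_tail, hlen,
    Nat.add_sub_cancel, List.get_eq_getElem, List.getElem_dropLast, List.getElem_tail, true_and]
  exact ⟨fun h i hi => ⟨h.1 i hi hi, h.2 i hi hi⟩,
    fun h => ⟨fun i _ hi => (h i hi).1, fun i _ hi => (h i hi).2⟩⟩

theorem IsBergeWalk.append (h₁ : IsBergeWalk (vs ++ [w]) es) (h₂ : IsBergeWalk (w :: ws) fs) :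
    IsBergeWalk (vs ++ w :: ws) (es ++ fs) := by
  refine ⟨?_, ?_⟩
  · rw [List.dropLast_append_cons]
    exact List.rel_append (by simpa using h₁.1) h₂.1
  · rw [← List.singleton_append, ← List.append_assoc, List.tail_append_of_ne_nil (by simp)]
    exact List.rel_append h₁.2 h₂.2

theorem IsBergeWalk.reverse (h : IsBergeWalk vs es) : IsBergeWalk vs.reverse es.reverse := by
  rw [IsBergeWalk, List.dropLast_reverse, List.tail_reverse, List.forall₂_reverse_iff,
    List.forall₂_reverse_iff]
  exact h.symm

theorem IsBergeWalk.length_eq (h : IsBergeWalk vs es) (hvs : vs ≠ []) :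
    vs.length = es.length + 1 := by
  have := h.1.length_eq
  have := List.length_pos_iff.2 hvs
  simp only [List.length_dropLast] at *
  omega

end IsBergeWalk

theorem BHypergraph.hasBergeCycle_of_isBergeWalk {H : BHypergraph α} {v : α} {vs : List α}
    {es : List (Finset α)} (hwalk : IsBergeWalk (v :: vs ++ [v]) es) (hvs : (v :: vs).Nodup)
    (hes : es.Nodup) (hH : ∀ e ∈ es, e ∈ H.edges) (h2 : 2 ≤ es.length) :
    H.HasBergeCycle es.length := by
  set n := es.length
  have hlen : (v :: vs).length = n := by
    have := hwalk.length_eq (by simp)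
    simp only [List.length_append, List.length_cons, List.length_nil] at this ⊢
    omega
  have : NeZero n := ⟨by omega⟩
  have hval (i : ZMod n) : i.val < (v :: vs).length := lt_of_lt_of_eq (ZMod.val_lt i) hlen.symm
  have hwrap (j : ℕ) (hj : j < n) :
      (v :: vs)[(j + 1) % n]'(lt_of_lt_of_eq (Nat.mod_lt _ (by omega)) hlen.symm) =
        (v :: vs ++ [v])[j + 1]'(by
          rw [List.length_append, hlen, List.length_singleton]; omega) := by
    rcases Nat.lt_or_ge (j + 1) n with h | h
    · rw [List.getElem_append_left (by omega)]
      simp only [Nat.mod_eq_of_lt h]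
    · have hj : j + 1 = n := by omega
      simp only [hj, Nat.mod_self, List.getElem_cons_zero]
      rw [List.getElem_append_right (by omega)]
      simp [← hlen]
  have hwalk' := (isBergeWalk_iff (by simpa using hlen)).1 hwalk
  refine ⟨h2, fun i => (v :: vs)[i.val]'(hval i), fun i => es[i.val]'(ZMod.val_lt i),
    fun i j hij => ZMod.val_injective n ((hvs.getElem_inj_iff).1 hij),
    fun i j hij => ZMod.val_injective n ((hes.getElem_inj_iff).1 hij),
    fun i => hH _ (List.getElem_mem _), fun i => ?_, fun i => ?_⟩
  · have := (hwalk' i.val (ZMod.val_lt i)).1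
    rwa [List.getElem_append_left] at this
  · simp only [ZMod.val_add, ZMod.val_one_eq_one_mod, Nat.add_mod_mod, hwrap _ (ZMod.val_lt i)]
    exact (hwalk' i.val (ZMod.val_lt i)).2

namespace BergePath

variable {H : BHypergraph α}

theorem isBergeWalk {ℓ : ℕ} (R : BergePath H ℓ) : IsBergeWalk (List.ofFn R.u) (List.ofFn R.f) :=
  (isBergeWalk_iff (by simp)).2 fun i hi => by
    simp only [List.length_ofFn] at hi
    simp only [List.getElem_ofFn]
    exact ⟨R.mem_cast ⟨i, hi⟩, R.mem_succ ⟨i, hi⟩⟩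

def interior {ℓ : ℕ} (R : BergePath H (ℓ + 1)) : List α :=
  List.ofFn fun i : Fin ℓ => R.u i.castSucc.succ

theorem ofFn_u_eq {ℓ : ℕ} (R : BergePath H (ℓ + 1)) :
    List.ofFn R.u = R.u 0 :: (R.interior ++ [R.u (Fin.last (ℓ + 1))]) := by
  rw [List.ofFn_succ, List.ofFn_succ', Fin.succ_last, List.concat_eq_append, interior]

theorem interior_nodup {ℓ : ℕ} (R : BergePath H (ℓ + 1)) : R.interior.Nodup :=
  List.nodup_ofFn.2 (R.u_inj.comp ((Fin.succ_injective _).comp (Fin.castSucc_injective _)))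

theorem exists_of_mem_interior {ℓ : ℕ} (R : BergePath H (ℓ + 1)) {w : α} (hw : w ∈ R.interior) :
    ∃ t, t ≠ 0 ∧ t ≠ Fin.last (ℓ + 1) ∧ R.u t = w := by
  obtain ⟨i, rfl⟩ := List.mem_ofFn.1 hw
  exact ⟨_, Fin.succ_ne_zero _, by rw [Fin.succ_castSucc]; exact (Fin.castSucc_lt_last _).ne, rfl⟩

end BergePath

namespace BergeCycle

variable {H : BHypergraph α} {c : ℕ} (C : BergeCycle H c)

theorem mem_vset {w : α} : w ∈ C.vset ↔ ∃ i, C.v i = w := by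
  simp [vset]

theorem mem_eset {f : Finset α} : f ∈ C.eset ↔ ∃ i, C.e i = f := by
  simp [eset]

/-- The vertices `v (a+1), …, v (a+n)` met when walking along `C` from `v a`. -/
def arcVerts (a : ZMod c) (n : ℕ) : List α := (List.range n).map fun j : ℕ => C.v (a + 1 + j)

/-- The edges `e a, …, e (a+n-1)` used when walking along `C` from `v a`. -/
def arcEdges (a : ZMod c) (n : ℕ) : List (Finset α) := (List.range n).map fun j : ℕ => C.e (a + j)

theorem arcVerts_add (a : ZMod c) (m n : ℕ) :
    C.arcVerts a (m + n) = C.arcVerts a m ++ C.arcVerts (a + m) n := by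
  simp only [arcVerts, List.range_add, List.map_append, List.map_map, Function.comp_def,
    Nat.cast_add]
  ring_nf

theorem arcEdges_add (a : ZMod c) (m n : ℕ) :
    C.arcEdges a (m + n) = C.arcEdges a m ++ C.arcEdges (a + m) n := by
  simp only [arcEdges, List.range_add, List.map_append, List.map_map, Function.comp_def,
    Nat.cast_add, add_assoc]

theorem arcVerts_succ (a : ZMod c) (n : ℕ) :
    C.arcVerts a (n + 1) = C.arcVerts a n ++ [C.v (a + 1 + n)] := by
  simp [arcVerts, List.range_succ]

theorem mem_vset_of_mem_arcVerts {a : ZMod c} {n : ℕ} {w : α} (hw : w ∈ C.arcVerts a n) :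
    w ∈ C.vset := by
  obtain ⟨j, -, rfl⟩ := List.mem_map.1 hw
  exact C.mem_vset.2 ⟨_, rfl⟩

theorem mem_eset_of_mem_arcEdges {a : ZMod c} {n : ℕ} {f : Finset α} (hf : f ∈ C.arcEdges a n) :
    f ∈ C.eset := by
  obtain ⟨j, -, rfl⟩ := List.mem_map.1 hf
  exact C.mem_eset.2 ⟨_, rfl⟩

theorem mem_edges_of_mem_arcEdges {a : ZMod c} {n : ℕ} {f : Finset α}
    (hf : f ∈ C.arcEdges a n) : f ∈ H.edges := by
  obtain ⟨j, -, rfl⟩ := List.mem_map.1 hf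
  exact C.e_mem _

theorem cons_arcVerts_isBergeWalk {w : α} {a : ZMod c} (hw : w ∈ C.e a) (n : ℕ) :
    IsBergeWalk (w :: C.arcVerts a n) (C.arcEdges a n) :=
  (isBergeWalk_iff (by simp [arcVerts, arcEdges])).2 fun i hi => by
    simp only [arcEdges, List.length_map, List.length_range] at hi
    rcases i with _ | i
    · simpa [arcVerts, arcEdges] using ⟨hw, C.mem_succ a⟩
    · simp only [arcVerts, arcEdges, List.getElem_cons_succ, List.getElem_map,
        List.getElem_range, Nat.cast_add, Nat.cast_one]
      refine ⟨by simpa [add_comm, add_left_comm] using C.mem_self (a + (i + 1)), ?_⟩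
      simpa [add_comm, add_left_comm, add_assoc] using C.mem_succ (a + (i + 1))

section Splice

variable {x y : ZMod c} {d k : ℕ}

theorem isBergeWalk_splice {u : α} (hd : y + 1 + d = x) (hk : x + 1 + k = y) (hux : u ∈ C.e x)
    (huy : u ∈ C.e y) {Rint : List α} {Rf : List (Finset α)}
    (hR : IsBergeWalk (C.v x :: (Rint ++ [C.v y])) Rf) :
    IsBergeWalk (u :: (C.arcVerts y (d + 1) ++ Rint ++ (C.arcVerts x (k + 1)).reverse) ++ [u])
      (C.arcEdges y (d + 1) ++ Rf ++ (C.arcEdges x (k + 1)).reverse) := by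
  have hA : C.arcVerts y (d + 1) = C.arcVerts y d ++ [C.v x] := by rw [arcVerts_succ, hd]
  have hB : (C.arcVerts x (k + 1)).reverse = C.v y :: (C.arcVerts x k).reverse := by
    rw [arcVerts_succ, hk, List.reverse_append, List.reverse_singleton, List.singleton_append]
  have h₁ := C.cons_arcVerts_isBergeWalk huy (d + 1)
  have h₃ := (C.cons_arcVerts_isBergeWalk hux (k + 1)).reverse
  rw [hA, ← List.cons_append] at h₁
  rw [List.reverse_cons, hB, List.cons_append] at h₃
  have h₁₂ := h₁.append hR
  rw [← List.cons_append, ← List.append_assoc] at h₁₂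
  convert h₁₂.append h₃ using 1
  simp [hA, hB]

theorem arcVerts_append_arcVerts_nodup (hd : y + 1 + d = x) (hc : d + 1 + (k + 1) = c) :
    (C.arcVerts y (d + 1) ++ C.arcVerts x (k + 1)).Nodup := by
  rw [show x = y + (d + 1 : ℕ) by rw [← hd]; push_cast; ring, ← arcVerts_add]
  exact ZMod.nodup_map_range_add C.v_inj _ hc.le

theorem arcEdges_append_arcEdges_nodup (hd : y + 1 + d = x) (hc : d + 1 + (k + 1) = c) :
    (C.arcEdges y (d + 1) ++ C.arcEdges x (k + 1)).Nodup := by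
  rw [show x = y + (d + 1 : ℕ) by rw [← hd]; push_cast; ring, ← arcEdges_add]
  exact ZMod.nodup_map_range_add C.e_inj _ hc.le

variable [NeZero c]

theorem hasBergeCycle_add_of_bergePath {u : α} (huC : u ∉ C.vset) (hxy : x ≠ y)
    (hux : u ∈ C.e x) (huy : u ∈ C.e y) {ℓ : ℕ} (R : BergePath H ℓ)
    (hR0 : R.u 0 = C.v x) (hRl : R.u (Fin.last ℓ) = C.v y)
    (hint : ∀ t : Fin (ℓ + 1), t ≠ 0 → t ≠ Fin.last ℓ → R.u t ∉ C.vset ∧ R.u t ≠ u)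
    (hRe : ∀ t : Fin ℓ, R.f t ∉ C.eset) :
    H.HasBergeCycle (c + ℓ) := by
  obtain _ | ℓ := ℓ
  · exact absurd (C.v_inj (hR0.symm.trans hRl)) hxy
  obtain ⟨d, k, hd, hk, hc⟩ := ZMod.exists_arc_lengths_of_ne hxy
  have hinterior {w : α} (hw : w ∈ R.interior) : w ∉ C.vset ∧ w ≠ u := by
    obtain ⟨t, ht0, htl, rfl⟩ := R.exists_of_mem_interior hw
    exact hint t ht0 htl
  have hR : IsBergeWalk (C.v x :: (R.interior ++ [C.v y])) (List.ofFn R.f) := by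
    rw [← hR0, ← hRl, ← R.ofFn_u_eq]
    exact R.isBergeWalk
  have hwalk := C.isBergeWalk_splice hd hk hux huy hR
  have hlen : (C.arcEdges y (d + 1) ++ List.ofFn R.f ++ (C.arcEdges x (k + 1)).reverse).length
      = c + (ℓ + 1) := by
    simp only [arcEdges, List.length_append, List.length_reverse, List.length_ofFn,
      List.length_map, List.length_range]
    omega
  rw [← hlen]
  refine BHypergraph.hasBergeCycle_of_isBergeWalk hwalk (List.nodup_cons.2 ⟨?_, ?_⟩) ?_ ?_
    (by have := C.hc; omega)
  · simp only [List.mem_append, List.mem_reverse, not_or]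
    exact ⟨⟨fun h => huC (C.mem_vset_of_mem_arcVerts h), fun h => (hinterior h).2 rfl⟩,
      fun h => huC (C.mem_vset_of_mem_arcVerts h)⟩
  · refine List.nodup_append_append_reverse (C.arcVerts_append_arcVerts_nodup hd hc)
      R.interior_nodup fun w hw hw' => (hinterior hw).1 ?_
    rcases List.mem_append.1 hw' with h | h <;> exact C.mem_vset_of_mem_arcVerts h
  · refine List.nodup_append_append_reverse (C.arcEdges_append_arcEdges_nodup hd hc)
      (List.nodup_ofFn.2 R.f_inj) fun f hf hf' => ?_
    obtain ⟨t, rfl⟩ := List.mem_ofFn.1 hf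
    rcases List.mem_append.1 hf' with h | h <;> exact hRe t (C.mem_eset_of_mem_arcEdges h)
  · intro f hf
    simp only [List.mem_append, List.mem_reverse, List.mem_ofFn] at hf
    rcases hf with (hf | ⟨t, rfl⟩) | hf
    · exact C.mem_edges_of_mem_arcEdges hf
    · exact R.f_mem t
    · exact C.mem_edges_of_mem_arcEdges hf

end Splice

def reverse : BergeCycle H c where
  hc := C.hc
  v i := C.v (-i)
  e i := C.e (-i - 1)
  v_inj _ _ h := neg_injective (C.v_inj h)
  e_inj _ _ h := neg_injective (sub_left_injective (C.e_inj h))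
  e_mem _ := C.e_mem _
  mem_self i := by simpa using C.mem_succ (-i - 1)
  mem_succ i := by simpa [sub_eq_add_neg, add_comm] using C.mem_self (-i - 1)

theorem reverse_vset : C.reverse.vset = C.vset := by
  ext w
  simp only [mem_vset, reverse]
  exact ⟨fun ⟨i, h⟩ => ⟨-i, h⟩, fun ⟨i, h⟩ => ⟨-i, by simpa using h⟩⟩

theorem reverse_eset : C.reverse.eset = C.eset := by
  ext f
  simp only [mem_eset, reverse]
  exact ⟨fun ⟨i, h⟩ => ⟨-i - 1, h⟩, fun ⟨i, h⟩ => ⟨-i - 1, by simpa using h⟩⟩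

theorem card_eq_card_v_mem [NeZero c] {W : Finset α} (hW : W ⊆ C.vset) :
    W.card = #{j | C.v j ∈ W} := by
  symm
  refine card_bij (fun j _ => C.v j) (fun j hj => by simpa using hj)
    (fun i _ j _ h => C.v_inj h) fun w hw => ?_
  obtain ⟨j, rfl⟩ := C.mem_vset.1 (hW hw)
  exact ⟨j, by simpa using hw, rfl⟩

end BergeCycle

namespace IsExpanding

variable {H : BHypergraph α} {c : ℕ} {C : BergeCycle H c} {u : α} {W : Finset α}

theorem reverse (hW : IsExpanding C u W) : IsExpanding C.reverse u W := by
  rwa [IsExpanding, C.reverse_vset, C.reverse_eset]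

variable [NeZero c]

theorem eq_of_mem_e_of_v_mem (hW : IsExpanding C u W) (hmax : ∀ m, H.HasBergeCycle m → m ≤ c)
    (huC : u ∉ C.vset) {x y : ZMod c} (hux : u ∈ C.e x) (hx : C.v x ∈ W) (huy : u ∈ C.e y)
    (hy : C.v y ∈ W) : x = y := by
  by_contra hxy
  obtain ⟨ℓ, R, hR0, hRl, hint, hRe⟩ := hW.2 _ hx _ hy (C.v_inj.ne hxy)
  have hℓ := hmax _ (C.hasBergeCycle_add_of_bergePath huC hxy hux huy R hR0 hRl hint hRe)
  obtain rfl : ℓ = 0 := by omega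
  exact hxy (C.v_inj (hR0.symm.trans hRl))

theorem eq_of_mem_e_of_v_succ_mem (hW : IsExpanding C u W)
    (hmax : ∀ m, H.HasBergeCycle m → m ≤ c) (huC : u ∉ C.vset) {x y : ZMod c}
    (hux : u ∈ C.e x) (hx : C.v (x + 1) ∈ W) (huy : u ∈ C.e y) (hy : C.v (y + 1) ∈ W) :
    x = y := by
  have h := hW.reverse.eq_of_mem_e_of_v_mem hmax (C.reverse_vset ▸ huC) (x := -x - 1)
    (y := -y - 1) (by simpa [BergeCycle.reverse] using hux)
    (by simpa [BergeCycle.reverse, add_comm] using hx)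
    (by simpa [BergeCycle.reverse] using huy) (by simpa [BergeCycle.reverse, add_comm] using hy)
  simpa using h

end IsExpanding

/-- Every `x` with `p x` has `s x`, or `s (x + 1)`, or lies in a gap `¬ s x ∧ ¬ s (x + 1)`, and
the `c - #s` indices outside `s` are the gaps together with the starts of the runs of `s`
(shifted by one). -/
theorem card_add_card_add_card_runs_le {c : ℕ} [NeZero c] (p s : ZMod c → Prop)
    [DecidablePred p] [DecidablePred s] (h₀ : ∀ x y, p x → s x → p y → s y → x = y)
    (h₁ : ∀ x y, p x → s (x + 1) → p y → s (y + 1) → x = y) :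
    #{x | p x} + #{x | s x} + #{x | s x ∧ ¬ s (x - 1)} ≤ c + 2 := by
  have hcover : #{x | p x} ≤ #{x | p x ∧ s x} + #{x | p x ∧ s (x + 1)} +
      #{x | ¬ s x ∧ ¬ s (x + 1)} := by
    refine (card_le_card fun x hx => ?_).trans ((card_union_le _ _).trans
      (Nat.add_le_add_right (card_union_le _ _) _))
    simp only [mem_filter, mem_univ, true_and, mem_union] at hx ⊢
    tauto
  have hps : #{x | p x ∧ s x} ≤ 1 := card_le_one.2 fun a ha b hb => by
    simp only [mem_filter, mem_univ, true_and] at ha hb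
    exact h₀ a b ha.1 ha.2 hb.1 hb.2
  have hps' : #{x | p x ∧ s (x + 1)} ≤ 1 := card_le_one.2 fun a ha b hb => by
    simp only [mem_filter, mem_univ, true_and] at ha hb
    exact h₁ a b ha.1 ha.2 hb.1 hb.2
  have hruns : #{x | s x ∧ ¬ s (x - 1)} = #{x | ¬ s x ∧ s (x + 1)} :=
    card_equiv (Equiv.subRight 1) (by simp [and_comm])
  have hgaps : #{x | ¬ s x ∧ s (x + 1)} + #{x | ¬ s x ∧ ¬ s (x + 1)} = #{x | ¬ s x} := by
    rw [← filter_filter, ← filter_filter, card_filter_add_card_filter_not]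
  have hs : #{x | s x} + #{x | ¬ s x} = c := by
    rw [card_filter_add_card_filter_not, card_univ, ZMod.card]
  omega

theorem statement19_general {α : Type*} [DecidableEq α] (c : ℕ) [NeZero c]
    (H : BHypergraph α)
    (C : BergeCycle H c) (hmax : ∀ m, H.HasBergeCycle m → m ≤ c)
    (u : α) (huC : u ∉ C.vset)
    (W : Finset α) (hW : IsExpanding C u W) :
    (∀ q : ℕ,
      q = ((Finset.univ : Finset (ZMod c)).filter
            (fun j => u ∈ C.e j ∧ u ∉ C.e (j - 1))).card →
      W.card + ((Finset.univ : Finset (ZMod c)).filter (fun j => u ∈ C.e j)).card + q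
        ≤ c + 2) ∧
    (∀ q' : ℕ,
      q' = ((Finset.univ : Finset (ZMod c)).filter
            (fun j => C.v j ∈ W ∧ C.v (j - 1) ∉ W)).card →
      ((Finset.univ : Finset (ZMod c)).filter (fun j => u ∈ C.e j)).card + W.card + q'
        ≤ c + 2) := by
  have hcard := C.card_eq_card_v_mem hW.1
  have hstart x y := hW.eq_of_mem_e_of_v_mem hmax huC (x := x) (y := y)
  have hend x y := hW.eq_of_mem_e_of_v_succ_mem hmax huC (x := x) (y := y)
  refine ⟨fun q hq => ?_, fun q' hq' => ?_⟩
  · have hshift : #{j | C.v (j + 1) ∈ W} = #{j | C.v j ∈ W} :=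
      card_equiv (Equiv.addRight 1) (by simp)
    have := card_add_card_add_card_runs_le (fun j => C.v (j + 1) ∈ W) (fun j => u ∈ C.e j)
      (fun x y hx hux hy huy => hend x y hux hx huy hy)
      (fun x y hx hux hy huy => add_right_cancel (hstart _ _ hux hx huy hy))
    omega
  · have := card_add_card_add_card_runs_le (fun j => u ∈ C.e j) (fun j => C.v j ∈ W)
      (fun x y hux hx huy hy => hstart x y hux hx huy hy)
      (fun x y hux hx huy hy => hend x y hux hx huy hy)
    omega

/-- Claim `no3`. Let `C = v_1, e_1, …, v_c, e_c, v_1` be a longest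
Berge cycle in an `r`-uniform hypergraph `H`, `u ∈ V(H) − V(C)`,
`B = {e_j ∈ E(C) : u ∈ e_j}` with `b = |B|`, and `W` a `(u,C)`-expanding set. Then:
(i) if the edges of `B` form exactly `q` maximal runs of consecutive edges along the
cyclic order of `C` (the number of runs being the number of `j` with `e_j ∈ B` and
`e_{j−1} ∉ B`), then `|W| ≤ c − (b + q) + 2`, i.e. `|W| + b + q ≤ c + 2`;
(ii) if the vertices of `W` form exactly `q'` maximal runs of consecutive vertices
along the cyclic order of `C`, then `b ≤ c − (|W| + q') + 2`, i.e.
`b + |W| + q' ≤ c + 2`. -/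
theorem statement19 {α : Type*} [DecidableEq α] (r c : ℕ) [NeZero c]
    (H : BHypergraph α) (hunif : H.Uniform r)
    (C : BergeCycle H c) (hmax : ∀ m, H.HasBergeCycle m → m ≤ c)
    (u : α) (huV : u ∈ H.verts) (huC : u ∉ C.vset)
    (W : Finset α) (hW : IsExpanding C u W) :
    (∀ q : ℕ,
      q = ((Finset.univ : Finset (ZMod c)).filter
            (fun j => u ∈ C.e j ∧ u ∉ C.e (j - 1))).card →
      W.card + ((Finset.univ : Finset (ZMod c)).filter (fun j => u ∈ C.e j)).card + q
        ≤ c + 2) ∧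
    (∀ q' : ℕ,
      q' = ((Finset.univ : Finset (ZMod c)).filter
            (fun j => C.v j ∈ W ∧ C.v (j - 1) ∉ W)).card →
      ((Finset.univ : Finset (ZMod c)).filter (fun j => u ∈ C.e j)).card + W.card + q'
        ≤ c + 2) :=
  statement19_general c H C hmax u huC W hW
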